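/- arXiv:1302.3992 — 3 statements merged into one kernel-verified Lean document; each statement's English description precedes it below -/
import Mathlib

section
/- Let A be an associative algebra over a field of characteristic zero, Mₖ the two-sided ideal generated by the k-th lower central series term Lₖ. Then [A,[A,Mₖ]] ⊆ Mₖ₊₁, assuming the containment MᵢMⱼ ⊆ M_{i+j−1} for odd i (in particular M₃Mₖ ⊆ M_{k+2} and M₂M₂ ⊆ M₃). -/
/-!
Write `[x, y] = x * y - y * x` and `m = p * l * q` with `l ∈ Lₖ`. Since
`p * l * q = (p * q) * l - p * [q, l]` and `p * [q, l] ∈ Mₖ₊₁`, it suffices to treat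
`[a, [b, p * l]]`, and the Leibniz rule gives
`[a, [b, p * l]] = [a, [b, p]] * l + [b, p] * [a, l] + [a, p * [b, l]]`.
The last two terms lie in `Mₖ₊₁` because `[a, l], [b, l] ∈ Lₖ₊₁`, and the first lies in
`M₃ Mₖ ⊆ Mₖ₊₂ ⊆ Mₖ₊₁`, which is where the hypothesis (for `i = 3`) enters.
-/

open Submodule

variable (K : Type*) (A : Type*)

/-- Lower central series Lie ideals: L₁ = A, Lₖ = [A, Lₖ₋₁]. -/
def lcs [CommRing K] [Ring A] [Algebra K A] : ℕ → Submodule K A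
  | 0 => ⊤
  | 1 => ⊤
  | (k+2) => Submodule.span K {x : A | ∃ a : A, ∃ l ∈ lcs (k+1), x = a * l - l * a}

/-- Lower central series two-sided ideals Mₖ = A·Lₖ·A. -/
def lcsM [CommRing K] [Ring A] [Algebra K A] (k : ℕ) : Submodule K A :=
  Submodule.span K {x : A | ∃ p q : A, ∃ l ∈ lcs K A k, x = p * l * q}

section LowerCentralSeries

variable {K A : Type*} [CommRing K] [Ring A] [Algebra K A]

lemma commutator_mem_lcs_succ {k : ℕ} (c : A) {l : A} (hl : l ∈ lcs K A k) :
    c * l - l * c ∈ lcs K A (k + 1) := by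
  cases k with
  | zero => exact mem_top
  | succ k => exact subset_span ⟨c, l, hl, rfl⟩

lemma lcs_succ_le (k : ℕ) : lcs K A (k + 1) ≤ lcs K A k := by
  induction k with
  | zero => exact le_top
  | succ k ih =>
    refine span_le.2 ?_
    rintro _ ⟨c, l, hl, rfl⟩
    exact commutator_mem_lcs_succ c (ih hl)

lemma mul_mul_mem_lcsM {k : ℕ} (p q : A) {l : A} (hl : l ∈ lcs K A k) :
    p * l * q ∈ lcsM K A k :=
  subset_span ⟨p, q, l, hl, rfl⟩

lemma lcs_le_lcsM (k : ℕ) : lcs K A k ≤ lcsM K A k := fun l hl => by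
  simpa using mul_mul_mem_lcsM (1 : A) 1 hl

lemma lcsM_le_iff {k : ℕ} {N : Submodule K A} :
    lcsM K A k ≤ N ↔ ∀ p q l : A, l ∈ lcs K A k → p * l * q ∈ N := by
  refine span_le.trans ⟨fun h p q l hl => h ⟨p, q, l, hl, rfl⟩, ?_⟩
  rintro h _ ⟨p, q, l, hl, rfl⟩
  exact h p q l hl

lemma mul_mem_lcsM_left {k : ℕ} (r : A) {x : A} (hx : x ∈ lcsM K A k) :
    r * x ∈ lcsM K A k := by
  have : lcsM K A k ≤ (lcsM K A k).comap (LinearMap.mulLeft K r) :=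
    lcsM_le_iff.2 fun p q l hl => by
      simpa only [mem_comap, LinearMap.mulLeft_apply, mul_assoc] using
        mul_mul_mem_lcsM (r * p) q hl
  exact this hx

lemma mul_mem_lcsM_right {k : ℕ} (r : A) {x : A} (hx : x ∈ lcsM K A k) :
    x * r ∈ lcsM K A k := by
  have : lcsM K A k ≤ (lcsM K A k).comap (LinearMap.mulRight K r) :=
    lcsM_le_iff.2 fun p q l hl => by
      simpa only [mem_comap, LinearMap.mulRight_apply, mul_assoc] using
        mul_mul_mem_lcsM p (q * r) hl
  exact this hx

lemma commutator_mem_lcsM {k : ℕ} (r : A) {x : A} (hx : x ∈ lcsM K A k) :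
    r * x - x * r ∈ lcsM K A k :=
  sub_mem (mul_mem_lcsM_left r hx) (mul_mem_lcsM_right r hx)

lemma lcsM_succ_le (k : ℕ) : lcsM K A (k + 1) ≤ lcsM K A k :=
  lcsM_le_iff.2 fun p q _ hl => mul_mul_mem_lcsM p q (lcs_succ_le k hl)

lemma mul_commutator_mem_lcsM_succ {k : ℕ} (p c : A) {l : A} (hl : l ∈ lcs K A k) :
    p * (c * l - l * c) ∈ lcsM K A (k + 1) := by
  simpa using mul_mul_mem_lcsM p 1 (commutator_mem_lcs_succ c hl)

lemma double_commutator_mul_mem_lcsM_succ {k : ℕ}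
    (h3 : lcsM K A 3 * lcsM K A k ≤ lcsM K A (k + 2)) (a b p : A) {l : A} (hl : l ∈ lcs K A k) :
    a * (b * (p * l) - p * l * b) - (b * (p * l) - p * l * b) * a ∈ lcsM K A (k + 1) := by
  have hbp : b * p - p * b ∈ lcs K A 2 := commutator_mem_lcs_succ (k := 1) b mem_top
  have habp : (a * (b * p - p * b) - (b * p - p * b) * a) * l ∈ lcsM K A (k + 1) :=
    lcsM_succ_le (k + 1) <| h3 <| mul_mem_mul
      (lcs_le_lcsM 3 (commutator_mem_lcs_succ a hbp)) (lcs_le_lcsM k hl)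
  have hbpal : (b * p - p * b) * (a * l - l * a) ∈ lcsM K A (k + 1) :=
    mul_commutator_mem_lcsM_succ _ a hl
  have hapbl : a * (p * (b * l - l * b)) - p * (b * l - l * b) * a ∈ lcsM K A (k + 1) :=
    commutator_mem_lcsM a (mul_commutator_mem_lcsM_succ p b hl)
  convert add_mem (add_mem habp hbpal) hapbl using 1
  noncomm_ring

lemma double_commutator_mem_lcsM_succ {k : ℕ}
    (h3 : lcsM K A 3 * lcsM K A k ≤ lcsM K A (k + 2)) (a b : A) {m : A} (hm : m ∈ lcsM K A k) :
    a * (b * m - m * b) - (b * m - m * b) * a ∈ lcsM K A (k + 1) := by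
  let ad : A → A →ₗ[K] A := fun c => LinearMap.mulLeft K c - LinearMap.mulRight K c
  have : lcsM K A k ≤ (lcsM K A (k + 1)).comap ((ad a).comp (ad b)) := by
    refine lcsM_le_iff.2 fun p q l hl => ?_
    have hpq : p * l * q = (p * q) * l - p * (q * l - l * q) := by noncomm_ring
    have hpql := double_commutator_mul_mem_lcsM_succ h3 a b (p * q) hl
    have hpql' := commutator_mem_lcsM a <| commutator_mem_lcsM b <|
      mul_commutator_mem_lcsM_succ (k := k) p q hl
    simp only [mem_comap, LinearMap.comp_apply, LinearMap.sub_apply, LinearMap.mulLeft_apply,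
      LinearMap.mulRight_apply, ad, hpq]
    convert sub_mem hpql hpql' using 1
    noncomm_ring
  simpa [ad] using this hm

end LowerCentralSeries

theorem stmt5_general {K A : Type*} [Field K] [Ring A] [Algebra K A]
    (h : ∀ i j : ℕ, Odd i → ∀ x ∈ lcsM K A i, ∀ y ∈ lcsM K A j, x * y ∈ lcsM K A (i + j - 1))
    (k : ℕ) (a b m : A) (hm : m ∈ lcsM K A k) :
    a * (b * m - m * b) - (b * m - m * b) * a ∈ lcsM K A (k + 1) := by
  have h3 : lcsM K A 3 * lcsM K A k ≤ lcsM K A (k + 2) :=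
    mul_le.2 fun x hx y hy => by simpa [add_comm] using h 3 k (by decide) x hx y hy
  exact double_commutator_mem_lcsM_succ h3 a b hm

/-- assuming `MᵢMⱼ ⊆ M_{i+j−1}` for odd `i`, we have `[A,[A,Mₖ]] ⊆ Mₖ₊₁`. -/
theorem stmt5 {K A : Type*} [Field K] [CharZero K] [Ring A] [Algebra K A]
    (h : ∀ i j : ℕ, Odd i → ∀ x ∈ lcsM K A i, ∀ y ∈ lcsM K A j, x * y ∈ lcsM K A (i + j - 1))
    (k : ℕ) (hk : 1 ≤ k) (a b m : A) (hm : m ∈ lcsM K A k) :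
    a * (b * m - m * b) - (b * m - m * b) * a ∈ lcsM K A (k + 1) :=
  stmt5_general h k a b m hm
end

section
/- Let A be an associative algebra over a field of characteristic zero satisfying the containments MᵢMⱼ ⊆ M_{i+j−1} for odd i and [A,[A,Mₖ]] ⊆ Mₖ₊₁. Then for all a, b, d ∈ A and m ∈ Mₖ, the element [b,d][a,m] + [a,d][b,m] lies in M_{k+2}. -/
open Submodule

variable (K : Type*) (A : Type*)

/-!
Write `T x = ⁅b, d⁆ * ⁅a, x⁆ + ⁅a, d⁆ * ⁅b, x⁆` (`symLieProd`). Modulo a two-sided ideal `I` containing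
`⁅A, ⁅A, x⁆⁆` the commutators `⁅v, x⁆` are central, so expanding `⁅a, ⁅b * d, x⁆⁆ ∈ I` gives
`⁅a, b⁆ * ⁅d, x⁆ + ⁅a, d⁆ * ⁅b, x⁆ ∈ I`; adding this to its `a ↔ b` swap leaves `T x ∈ I`.
Hence `T` maps `Lₖ` into `Mₖ₊₂`, and all of `A` into `M₃`. Since
`T (x * y) = T x * y + x * T y + ⁅⁅b, d⁆, x⁆ * ⁅a, y⁆ + ⁅⁅a, d⁆, x⁆ * ⁅b, y⁆`, the hypothesis
`M₃ Mₖ ⊆ Mₖ₊₂` gives `T (p * l) ∈ Mₖ₊₂` for `l ∈ Lₖ`; this covers the generators of `Mₖ`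
because `p * l * q = p * q * l - p * ⁅q, l⁆` with `⁅q, l⁆ ∈ Lₖ₊₁ ⊆ Lₖ`.
-/

theorem lie_mul_lie_add_lie_mul_lie_mem {B : Type*} [Ring B] (I : TwoSidedIdeal B) {x : B}
    (hx : ∀ u v : B, ⁅u, ⁅v, x⁆⁆ ∈ I) (a b d : B) :
    ⁅b, d⁆ * ⁅a, x⁆ + ⁅a, d⁆ * ⁅b, x⁆ ∈ I := by
  have key : ∀ a b d : B, ⁅a, b⁆ * ⁅d, x⁆ + ⁅a, d⁆ * ⁅b, x⁆ ∈ I := by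
    intro a b d
    have h := I.add_mem (I.sub_mem (I.sub_mem (hx a (b * d)) (I.mul_mem_left b _ (hx a d)))
      (I.mul_mem_right _ d (hx a b))) (hx ⁅a, d⁆ b)
    convert h using 1
    simp only [Ring.lie_def]
    noncomm_ring
  convert I.add_mem (key b a d) (key a b d) using 1
  simp only [Ring.lie_def]
  noncomm_ring

section LowerCentralSeries

variable {R B : Type*} [CommRing R] [Ring B] [Algebra R B]

theorem lie_mem_lcs_succ {j : ℕ} {l : B} (hl : l ∈ lcs R B j) (u : B) :
    ⁅u, l⁆ ∈ lcs R B (j + 1) :=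
  match j with
  | 0 => mem_top
  | _ + 1 => subset_span ⟨u, l, hl, rfl⟩

theorem lie_lie_mem_lcs_three (u v w : B) : ⁅⁅u, v⁆, w⁆ ∈ lcs R B 3 := by
  rw [show ⁅⁅u, v⁆, w⁆ = -⁅w, ⁅u, v⁆⁆ from (neg_sub _ _).symm]
  exact neg_mem (lie_mem_lcs_succ (lie_mem_lcs_succ (j := 1) (l := v) mem_top u) w)

theorem lcs_succ_le_s11 : ∀ j : ℕ, lcs R B (j + 1) ≤ lcs R B j
  | 0 | 1 => le_top
  | j + 2 => span_mono fun _ ⟨u, l, hl, hx⟩ => ⟨u, l, lcs_succ_le_s11 (j + 1) hl, hx⟩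

theorem mem_lcsM_of_mem_lcs {j : ℕ} {l : B} (hl : l ∈ lcs R B j) : l ∈ lcsM R B j :=
  subset_span ⟨1, 1, l, hl, by simp⟩

theorem mul_mem_lcsM_left_s11 {j : ℕ} (x : B) {y : B} (hy : y ∈ lcsM R B j) :
    x * y ∈ lcsM R B j := by
  induction hy using span_induction with
  | mem _ h =>
    obtain ⟨p, q, l, hl, rfl⟩ := h
    exact subset_span ⟨x * p, q, l, hl, by simp only [mul_assoc]⟩
  | zero => simp
  | add _ _ _ _ h₁ h₂ => rw [mul_add]; exact add_mem h₁ h₂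
  | smul r _ _ h => rw [mul_smul_comm]; exact smul_mem _ r h

theorem mul_mem_lcsM_right_s11 {j : ℕ} {x : B} (hx : x ∈ lcsM R B j) (y : B) :
    x * y ∈ lcsM R B j := by
  induction hx using span_induction with
  | mem _ h =>
    obtain ⟨p, q, l, hl, rfl⟩ := h
    exact subset_span ⟨p, q * y, l, hl, by simp only [mul_assoc]⟩
  | zero => simp
  | add _ _ _ _ h₁ h₂ => rw [add_mul]; exact add_mem h₁ h₂
  | smul r _ _ h => rw [smul_mul_assoc]; exact smul_mem _ r h

theorem lie_mem_lcsM {j : ℕ} {m : B} (hm : m ∈ lcsM R B j) (u : B) : ⁅u, m⁆ ∈ lcsM R B j :=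
  sub_mem (mul_mem_lcsM_left_s11 u hm) (mul_mem_lcsM_right_s11 hm u)

variable (R B) in
def lcsIdeal (j : ℕ) : TwoSidedIdeal B :=
  .mk' (lcsM R B j) (zero_mem _) add_mem neg_mem (mul_mem_lcsM_left_s11 _) (mul_mem_lcsM_right_s11 · _)

theorem mem_lcsIdeal {j : ℕ} {x : B} : x ∈ lcsIdeal R B j ↔ x ∈ lcsM R B j :=
  TwoSidedIdeal.mem_mk' ..

variable (R) in
def symLieProd (a b d : B) : B →ₗ[R] B where
  toFun x := ⁅b, d⁆ * ⁅a, x⁆ + ⁅a, d⁆ * ⁅b, x⁆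
  map_add' x y := by simp only [Ring.lie_def]; noncomm_ring
  map_smul' r x := by simp only [Ring.lie_def, RingHom.id_apply, mul_smul_comm, smul_mul_assoc,
    ← smul_sub, smul_add]

theorem symLieProd_apply (a b d x : B) :
    symLieProd R a b d x = ⁅b, d⁆ * ⁅a, x⁆ + ⁅a, d⁆ * ⁅b, x⁆ :=
  rfl

theorem symLieProd_mul (a b d x y : B) :
    symLieProd R a b d (x * y) = symLieProd R a b d x * y + x * symLieProd R a b d y
      + ⁅⁅b, d⁆, x⁆ * ⁅a, y⁆ + ⁅⁅a, d⁆, x⁆ * ⁅b, y⁆ := by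
  simp only [symLieProd_apply, Ring.lie_def]
  noncomm_ring

theorem symLieProd_mem_lcsM_of_mem_lcs {j : ℕ} {l : B} (hl : l ∈ lcs R B j) (a b d : B) :
    symLieProd R a b d l ∈ lcsM R B (j + 2) :=
  mem_lcsIdeal.1 <| lie_mul_lie_add_lie_mul_lie_mem _
    (fun u v => mem_lcsIdeal.2 <| mem_lcsM_of_mem_lcs <|
      lie_mem_lcs_succ (lie_mem_lcs_succ hl v) u)
    a b d

theorem symLieProd_mul_mem_lcsM {k : ℕ}
    (hM3 : ∀ x ∈ lcsM R B 3, ∀ y ∈ lcsM R B k, x * y ∈ lcsM R B (k + 2)) (a b d x : B)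
    {y : B} (hy : y ∈ lcsM R B k)
    (hTy : symLieProd R a b d y ∈ lcsM R B (k + 2)) :
    symLieProd R a b d (x * y) ∈ lcsM R B (k + 2) := by
  have hTx : symLieProd R a b d x ∈ lcsM R B 3 :=
    symLieProd_mem_lcsM_of_mem_lcs (j := 1) mem_top a b d
  have hM3_lie (c c' : B) : ⁅⁅c, d⁆, x⁆ * ⁅c', y⁆ ∈ lcsM R B (k + 2) :=
    hM3 _ (mem_lcsM_of_mem_lcs (lie_lie_mem_lcs_three c d x)) _ (lie_mem_lcsM hy c')
  rw [symLieProd_mul]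
  exact add_mem (add_mem (add_mem (hM3 _ hTx y hy) (mul_mem_lcsM_left_s11 x hTy)) (hM3_lie b a))
    (hM3_lie a b)

theorem symLieProd_mem_lcsM {k : ℕ}
    (hM3 : ∀ x ∈ lcsM R B 3, ∀ y ∈ lcsM R B k, x * y ∈ lcsM R B (k + 2)) (a b d : B)
    {m : B} (hm : m ∈ lcsM R B k) :
    symLieProd R a b d m ∈ lcsM R B (k + 2) := by
  have hmul (l : B) (hl : l ∈ lcs R B k) (p : B) :
      symLieProd R a b d (p * l) ∈ lcsM R B (k + 2) :=
    symLieProd_mul_mem_lcsM hM3 a b d p (mem_lcsM_of_mem_lcs hl)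
      (symLieProd_mem_lcsM_of_mem_lcs hl a b d)
  refine (span_le (p := (lcsM R B (k + 2)).comap (symLieProd R a b d))).2 ?_ hm
  rintro _ ⟨p, q, l, hl, rfl⟩
  have hsplit : p * l * q = p * q * l - p * ⁅q, l⁆ := by
    rw [Ring.lie_def]
    noncomm_ring
  rw [SetLike.mem_coe, mem_comap, hsplit, map_sub]
  exact sub_mem (hmul l hl _) (hmul _ (lcs_succ_le_s11 k (lie_mem_lcs_succ hl q)) p)

end LowerCentralSeries

theorem stmt11_general {K A : Type*} [Field K] [Ring A] [Algebra K A] (k : ℕ)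
    (h1 : ∀ i j : ℕ, Odd i → ∀ x ∈ lcsM K A i, ∀ y ∈ lcsM K A j, x * y ∈ lcsM K A (i + j - 1))
    (a b d m : A) (hm : m ∈ lcsM K A k) :
    (b * d - d * b) * (a * m - m * a) + (a * d - d * a) * (b * m - m * b)
      ∈ lcsM K A (k + 2) := by
  have hM3 : ∀ x ∈ lcsM K A 3, ∀ y ∈ lcsM K A k, x * y ∈ lcsM K A (k + 2) :=
    fun x hx y hy => (show 3 + k - 1 = k + 2 by omega) ▸ h1 3 k ⟨1, rfl⟩ x hx y hy
  simpa only [symLieProd_apply, Ring.lie_def] using symLieProd_mem_lcsM hM3 a b d hm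

/-- assuming `MᵢMⱼ ⊆ M_{i+j−1}` for odd `i` and `[A,[A,Mₖ]] ⊆ Mₖ₊₁`,
the element `[b,d][a,m] + [a,d][b,m]` lies in `M_{k+2}` for `m ∈ Mₖ`. -/
theorem stmt11 {K A : Type*} [Field K] [CharZero K] [Ring A] [Algebra K A] (k : ℕ)
    (h1 : ∀ i j : ℕ, Odd i → ∀ x ∈ lcsM K A i, ∀ y ∈ lcsM K A j, x * y ∈ lcsM K A (i + j - 1))
    (h2 : ∀ j : ℕ, ∀ a b : A, ∀ n ∈ lcsM K A j,
        a * (b * n - n * b) - (b * n - n * b) * a ∈ lcsM K A (j + 1))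
    (a b d m : A) (hm : m ∈ lcsM K A k) :
    (b * d - d * b) * (a * m - m * a) + (a * d - d * a) * (b * m - m * b)
      ∈ lcsM K A (k + 2) :=
  stmt11_general k h1 a b d m hm
end

section
/- Let A = k⟨x,y⟩/(y²) be the free algebra on two generators modulo the relation y² = 0, over a field k of characteristic zero. Then the elements [xˡ, y] for l ≥ 1 are linearly independent in N₂(A) = M₂(A)/M₃(A); in particular N₂(A) is infinite-dimensional. -/
/-!
Map `A` to the algebra of matrices `[[a, b, d], [0, a, c], [0, 0, a]]` over `k[X]` by
`x ↦ X + E₁₂`, `y ↦ E₂₃` (allowed because `E₂₃² = 0`). In that algebra every commutator is a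
multiple of `E₁₃`, which is central, so `[a, [b, c]]` and hence all of `M₃(A)` map to zero.
Since `(X + E₁₂)^(l+1) = X^(l+1) + (l+1) X^l E₁₂`, the commutator `[x^(l+1), y]` maps to
`(l+1) X^l E₁₃`. Thus the `(1, 3)` entry is a linear functional on `A/M₃` sending the classes of
`[x^(l+1), y]` to the polynomials `(l+1) X^l`, which are independent in characteristic zero.
These classes come from `N₂ = M₂/M₃`, which is therefore infinite-dimensional.
-/

open Submodule

variable (K : Type*) (A : Type*)

/-- The relation imposing `y² = 0` on the free algebra on two generators. -/
def relY2 (K : Type*) [Field K] (a b : FreeAlgebra K Bool) : Prop :=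
  a = FreeAlgebra.ι K true * FreeAlgebra.ι K true ∧ b = 0

section LowerCentralSeries

variable {K A B : Type*} [CommRing K] [Ring A] [Algebra K A] [Ring B] [Algebra K B]

theorem commutator_mem_lcs_two (a b : A) : a * b - b * a ∈ lcs K A 2 :=
  subset_span ⟨a, b, mem_top, rfl⟩

theorem mem_lcsM_of_mem_lcs_s13 {k : ℕ} {l : A} (hl : l ∈ lcs K A k) : l ∈ lcsM K A k :=
  subset_span ⟨1, 1, l, hl, by rw [one_mul, mul_one]⟩

theorem lcsM_three_le_ker (f : A →ₐ[K] B)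
    (hf : ∀ a b c : A, Commute (f a) (f b * f c - f c * f b)) :
    lcsM K A 3 ≤ LinearMap.ker f.toLinearMap := by
  have hcomm : ∀ l ∈ lcs K A 2, ∀ a, Commute (f a) (f l) := by
    intro l hl a
    induction hl using Submodule.span_induction with
    | mem x hx =>
      obtain ⟨b, c, -, rfl⟩ := hx
      simpa using hf a b c
    | zero => simp
    | add x y _ _ hx hy => simpa using hx.add_right hy
    | smul r x _ hx => simpa using hx.smul_right r
  have hlcs : lcs K A 3 ≤ LinearMap.ker f.toLinearMap := by
    refine span_le.2 ?_
    rintro _ ⟨a, l, hl, rfl⟩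
    simpa [sub_eq_zero] using (hcomm l hl a).eq
  refine span_le.2 ?_
  rintro _ ⟨p, q, l, hl, rfl⟩
  have hl0 : f l = 0 := hlcs hl
  simp [hl0]

end LowerCentralSeries

theorem not_finite_quotient_comap_subtype_of_linearIndependent {R M ι : Type*} [Ring R]
    [StrongRankCondition R] [AddCommGroup M] [Module R M] [Infinite ι] {P Q : Submodule R M}
    (v : ι → M) (hvP : ∀ i, v i ∈ P) (hv : LinearIndependent R (Q.mkQ ∘ v)) :
    ¬ Module.Finite R (P ⧸ Q.comap P.subtype) := by
  intro hfin
  refine Module.Finite.not_linearIndependent_of_infinite (R := R)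
    (fun i ↦ (Submodule.Quotient.mk ⟨v i, hvP i⟩ : P ⧸ Q.comap P.subtype)) ?_
  exact hv.of_comp (Q.comap P.subtype |>.mapQ Q P.subtype le_rfl)

section Heisenberg

open Matrix

variable {K R : Type*} [CommRing K] [CommRing R] [Algebra K R]

def heisMatrix (a b c d : R) : Matrix (Fin 3) (Fin 3) R :=
  !![a, b, d; 0, a, c; 0, 0, a]

theorem heisMatrix_add (a b c d a' b' c' d' : R) :
    heisMatrix a b c d + heisMatrix a' b' c' d' =
      heisMatrix (a + a') (b + b') (c + c') (d + d') := by
  ext i j; fin_cases i <;> fin_cases j <;> simp [heisMatrix]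

theorem heisMatrix_mul (a b c d a' b' c' d' : R) :
    heisMatrix a b c d * heisMatrix a' b' c' d' =
      heisMatrix (a * a') (a * b' + b * a') (a * c' + c * a') (a * d' + b * c' + d * a') := by
  ext i j; fin_cases i <;> fin_cases j <;> simp [heisMatrix, mul_apply, Fin.sum_univ_three]

theorem heisMatrix_sub (a b c d a' b' c' d' : R) :
    heisMatrix a b c d - heisMatrix a' b' c' d' =
      heisMatrix (a - a') (b - b') (c - c') (d - d') := by
  ext i j; fin_cases i <;> fin_cases j <;> simp [heisMatrix]

theorem heisMatrix_zero : heisMatrix (0 : R) 0 0 0 = 0 := by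
  ext i j; fin_cases i <;> fin_cases j <;> simp [heisMatrix]

theorem algebraMap_eq_heisMatrix (r : K) :
    algebraMap K (Matrix (Fin 3) (Fin 3) R) r = heisMatrix (algebraMap K R r) 0 0 0 := by
  ext i j; fin_cases i <;> fin_cases j <;> simp [heisMatrix, algebraMap_matrix_apply]

theorem heisMatrix_commutator (a b c d a' b' c' d' : R) :
    heisMatrix a b c d * heisMatrix a' b' c' d' - heisMatrix a' b' c' d' * heisMatrix a b c d =
      heisMatrix 0 0 0 (b * c' - b' * c) := by
  rw [heisMatrix_mul, heisMatrix_mul, heisMatrix_sub]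
  congr 1 <;> ring

theorem commute_heisMatrix_center (a b c d e : R) :
    Commute (heisMatrix a b c d) (heisMatrix 0 0 0 e) := by
  rw [Commute, SemiconjBy, ← sub_eq_zero, heisMatrix_commutator, ← heisMatrix_zero]
  congr 1; ring

theorem heisMatrix_pow_succ (a b : R) (n : ℕ) :
    heisMatrix a b 0 0 ^ (n + 1) = heisMatrix (a ^ (n + 1)) ((n + 1) * a ^ n * b) 0 0 := by
  induction n with
  | zero => simp
  | succ n ih =>
    rw [pow_succ, ih, heisMatrix_mul]
    congr 1 <;> push_cast <;> ring

variable (K R) in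
def heisenbergSubalgebra : Subalgebra K (Matrix (Fin 3) (Fin 3) R) where
  carrier := {M | ∃ a b c d, heisMatrix a b c d = M}
  mul_mem' := by
    rintro _ _ ⟨a, b, c, d, rfl⟩ ⟨a', b', c', d', rfl⟩
    exact ⟨_, _, _, _, (heisMatrix_mul ..).symm⟩
  add_mem' := by
    rintro _ _ ⟨a, b, c, d, rfl⟩ ⟨a', b', c', d', rfl⟩
    exact ⟨_, _, _, _, (heisMatrix_add ..).symm⟩
  algebraMap_mem' r := ⟨_, _, _, _, (algebraMap_eq_heisMatrix r).symm⟩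

theorem heisMatrix_mem (a b c d : R) : heisMatrix a b c d ∈ heisenbergSubalgebra K R :=
  ⟨a, b, c, d, rfl⟩

theorem heisenbergSubalgebra.commute_commutator (u v w : heisenbergSubalgebra K R) :
    Commute u (v * w - w * v) := by
  obtain ⟨_, ⟨a, b, c, d, rfl⟩⟩ := u
  obtain ⟨_, ⟨a', b', c', d', rfl⟩⟩ := v
  obtain ⟨_, ⟨a'', b'', c'', d'', rfl⟩⟩ := w
  rw [Commute, SemiconjBy, Subtype.ext_iff]
  push_cast
  rw [heisMatrix_commutator]
  exact commute_heisMatrix_center ..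

end Heisenberg

section Presentation

open Polynomial

variable (K : Type*) [Field K]

theorem linearIndependent_natCast_add_one_mul_X_pow [CharZero K] :
    LinearIndependent K fun l : ℕ ↦ ((l : K[X]) + 1) * X ^ l := by
  have := (basisMonomials K).linearIndependent.units_smul
    fun l ↦ Units.mk0 ((l : K) + 1) (Nat.cast_add_one_ne_zero l)
  convert this using 1
  funext l
  simp [smul_eq_C_mul, X_pow_eq_monomial]

noncomputable def genX : RingQuot (relY2 K) :=
  RingQuot.mkRingHom (relY2 K) (FreeAlgebra.ι K false)

noncomputable def genY : RingQuot (relY2 K) :=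
  RingQuot.mkRingHom (relY2 K) (FreeAlgebra.ι K true)

noncomputable def heisGenerator : Bool → heisenbergSubalgebra K K[X]
  | false => ⟨heisMatrix X 1 0 0, heisMatrix_mem ..⟩
  | true => ⟨heisMatrix 0 0 1 0, heisMatrix_mem ..⟩

noncomputable def toHeisenberg : RingQuot (relY2 K) →ₐ[K] heisenbergSubalgebra K K[X] :=
  RingQuot.liftAlgHom K ⟨FreeAlgebra.lift K (heisGenerator K), by
    rintro _ _ ⟨rfl, rfl⟩
    ext1
    simp [heisGenerator, heisMatrix_mul, heisMatrix_zero]⟩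

theorem toHeisenberg_mkRingHom_ι (t : Bool) :
    toHeisenberg K (RingQuot.mkRingHom (relY2 K) (FreeAlgebra.ι K t)) = heisGenerator K t := by
  rw [toHeisenberg, ← RingQuot.mkAlgHom_coe K, AlgHom.coe_toRingHom,
    RingQuot.liftAlgHom_mkAlgHom_apply, FreeAlgebra.lift_ι_apply]

theorem coe_toHeisenberg_commutator (l : ℕ) :
    (toHeisenberg K (genX K ^ (l + 1) * genY K - genY K * genX K ^ (l + 1)) :
      Matrix (Fin 3) (Fin 3) K[X]) = heisMatrix 0 0 0 (((l : K[X]) + 1) * X ^ l) := by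
  simp only [genX, genY, map_sub, map_mul, map_pow, toHeisenberg_mkRingHom_ι]
  push_cast [heisGenerator]
  rw [heisMatrix_pow_succ, heisMatrix_commutator]
  congr 1; ring

theorem lcsM_three_le_ker_toHeisenberg :
    lcsM K (RingQuot (relY2 K)) 3 ≤ LinearMap.ker (toHeisenberg K).toLinearMap :=
  lcsM_three_le_ker (toHeisenberg K) fun a b c ↦
    heisenbergSubalgebra.commute_commutator
      (toHeisenberg K a) (toHeisenberg K b) (toHeisenberg K c)

noncomputable def cornerEntry : (RingQuot (relY2 K) ⧸ lcsM K (RingQuot (relY2 K)) 3) →ₗ[K] K[X] :=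
  Matrix.entryLinearMap K K[X] 0 2 ∘ₗ (heisenbergSubalgebra K K[X]).val.toLinearMap ∘ₗ
    (lcsM K (RingQuot (relY2 K)) 3).liftQ (toHeisenberg K).toLinearMap
      (lcsM_three_le_ker_toHeisenberg K)

theorem cornerEntry_mkQ_commutator (l : ℕ) :
    cornerEntry K ((lcsM K (RingQuot (relY2 K)) 3).mkQ
      (genX K ^ (l + 1) * genY K - genY K * genX K ^ (l + 1))) = ((l : K[X]) + 1) * X ^ l := by
  change (toHeisenberg K _ : Matrix (Fin 3) (Fin 3) K[X]) 0 2 = _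
  rw [coe_toHeisenberg_commutator]
  rfl

end Presentation

/-- in `A = k⟨x,y⟩/(y²)`, the classes of `[xˡ, y]`, `l ≥ 1`, are linearly
independent in `N₂(A) = M₂(A)/M₃(A)` (viewed inside `A/M₃`); in particular `N₂(A)` is
infinite dimensional. -/
theorem stmt13 {K : Type*} [Field K] [CharZero K] :
    (LinearIndependent K fun l : ℕ =>
      (lcsM K (RingQuot (relY2 K)) 3).mkQ
        ((RingQuot.mkRingHom (relY2 K) (FreeAlgebra.ι K false)) ^ (l + 1)
            * RingQuot.mkRingHom (relY2 K) (FreeAlgebra.ι K true)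
          - RingQuot.mkRingHom (relY2 K) (FreeAlgebra.ι K true)
            * (RingQuot.mkRingHom (relY2 K) (FreeAlgebra.ι K false)) ^ (l + 1)))
    ∧ ¬ Module.Finite K
        (@HasQuotient.Quotient _ _
          (@Submodule.hasQuotient K _ _ (lcsM K (RingQuot (relY2 K)) 2).addCommGroup _)
          (Submodule.comap (lcsM K (RingQuot (relY2 K)) 2).subtype
            (lcsM K (RingQuot (relY2 K)) 3))) := by
  have hli : LinearIndependent K fun l : ℕ ↦ (lcsM K (RingQuot (relY2 K)) 3).mkQ
      (genX K ^ (l + 1) * genY K - genY K * genX K ^ (l + 1)) := by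
    refine .of_comp (cornerEntry K) ?_
    convert linearIndependent_natCast_add_one_mul_X_pow K using 1
    exact funext (cornerEntry_mkQ_commutator K)
  exact ⟨hli, not_finite_quotient_comap_subtype_of_linearIndependent _
    (fun _ ↦ mem_lcsM_of_mem_lcs_s13 (commutator_mem_lcs_two _ _)) hli⟩
end
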